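/- Fix a field k and c⃗ = (c₁,…,c_m). Let B ⊆ A⁺_{c⃗} be a k-subalgebra of corank g that is spanned as a k-vector space by 1 together with a set of monomials tᵢ^d. For each i, set Mᵢ = {0} ∪ {d : 1 ≤ d ≤ cᵢ − 1, tᵢ^d ∈ B} ∪ {d ∈ ℕ : d ≥ cᵢ}. Then each Mᵢ is a numerical monoid with conductor c(Mᵢ) ≤ cᵢ, the genera satisfy Σ_{i=1}^m g(Mᵢ) = g, and B = k·1 ⊕ span_k{tᵢ^d : 1 ≤ d ≤ cᵢ − 1, d ∈ Mᵢ}. -/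

import Mathlib

set_option synthInstance.maxHeartbeats 1000000
set_option maxHeartbeats 2000000
open Polynomial

/-- The truncated polynomial ring `k[X]/(X^c)`. -/
abbrev TruncP (k : Type*) [CommRing k] (c : ℕ) : Type _ :=
  Polynomial k ⧸ Ideal.span {(X : Polynomial k) ^ c}

/-- The ambient product algebra `∏ i, k[tᵢ]/(tᵢ^{cᵢ})`. -/
abbrev TruncPi (k : Type*) [CommRing k] {ι : Type*} (c : ι → ℕ) : Type _ :=
  ∀ i, TruncP k (c i)

/-- The image of `X` in `TruncP k c`. -/
noncomputable def truncX (k : Type*) [CommRing k] (c : ℕ) : TruncP k c :=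
  Ideal.Quotient.mk _ X

/-- The monomial `tᵢ^j` in `∏ i, k[tᵢ]/(tᵢ^{cᵢ})`. -/
noncomputable def tpow {k : Type*} [CommRing k] {ι : Type*} [DecidableEq ι]
    (c : ι → ℕ) (i : ι) (j : ℕ) : TruncPi k c :=
  Pi.single i (truncX k (c i) ^ j)

/-- The constant term of a truncated polynomial (evaluation at `0`), for `c ≥ 1`. -/
noncomputable def constTerm (k : Type*) [CommRing k] (c : ℕ) (hc : 1 ≤ c) :
    TruncP k c →ₐ[k] k :=
  Ideal.Quotient.liftₐ _ (aeval (0 : k)) (by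
    intro a ha
    rw [Ideal.mem_span_singleton] at ha
    obtain ⟨q, rfl⟩ := ha
    have h0 : (0 : k) ^ c = 0 := zero_pow (Nat.one_le_iff_ne_zero.mp hc)
    simp [h0])

/-- `A⁺`: the subalgebra of tuples with all constant terms equal. -/
noncomputable def Aplus (k : Type*) [CommRing k] {ι : Type*} (c : ι → ℕ)
    (hc : ∀ i, 1 ≤ c i) : Subalgebra k (TruncPi k c) :=
  ⨅ (i : ι) (j : ι),
    AlgHom.equalizer
      ((constTerm k (c i) (hc i)).comp (Pi.evalAlgHom k (fun i => TruncP k (c i)) i))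
      ((constTerm k (c j) (hc j)).comp (Pi.evalAlgHom k (fun i => TruncP k (c i)) j))

/-- `m_I`: the span of the monomials `tᵢ^j`, `i ∈ I`, `1 ≤ j ≤ cᵢ - 1`. -/
noncomputable def mPart (k : Type*) [CommRing k] {ι : Type*} [DecidableEq ι]
    (c : ι → ℕ) (I : Set ι) : Submodule k (TruncPi k c) :=
  Submodule.span k {x | ∃ i ∈ I, ∃ j, 1 ≤ j ∧ j < c i ∧ x = tpow c i j}

/-- `𝔪^d`: the span of the monomials of degree at least `d`. -/
noncomputable def mPow (k : Type*) [CommRing k] {ι : Type*} [DecidableEq ι]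
    (c : ι → ℕ) (d : ℕ) : Submodule k (TruncPi k c) :=
  Submodule.span k {x | ∃ i, ∃ j, d ≤ j ∧ 1 ≤ j ∧ j < c i ∧ x = tpow c i j}

/-- Componentwise projection onto the coordinates in `I` (the projection along `m_{Iᶜ}`). -/
noncomputable def projL (k : Type*) [CommRing k] {ι : Type*} [DecidableEq ι] (c : ι → ℕ)
    (I : Finset ι) : TruncPi k c →ₗ[k] TruncPi k c where
  toFun x i := if i ∈ I then x i else 0
  map_add' x y := by funext i; by_cases h : i ∈ I <;> simp [h]
  map_smul' r x := by funext i; by_cases h : i ∈ I <;> simp [h]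

/-- Scaling `t ↦ λ·t` on `k[t]/(t^c)`, as a `k`-algebra homomorphism. -/
noncomputable def scaleHom (k : Type*) [CommRing k] (c : ℕ) (lam : k) :
    TruncP k c →ₐ[k] TruncP k c :=
  Ideal.Quotient.liftₐ _ (aeval (lam • truncX k c)) (by
    intro a ha
    rw [Ideal.mem_span_singleton] at ha
    obtain ⟨q, rfl⟩ := ha
    have hx : truncX k c ^ c = 0 := by
      show (Ideal.Quotient.mk (Ideal.span {(X : Polynomial k) ^ c}) X) ^ c = 0
      rw [← map_pow, Ideal.Quotient.eq_zero_iff_mem]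
      exact Ideal.mem_span_singleton_self _
    simp [_root_.smul_pow, hx])

/-- The torus action `tᵢ ↦ λᵢ·tᵢ` on `∏ i, k[tᵢ]/(tᵢ^{cᵢ})`. -/
noncomputable def torusHom {k : Type*} [CommRing k] {ι : Type*} (c : ι → ℕ) (lam : ι → k) :
    TruncPi k c →ₐ[k] TruncPi k c :=
  Pi.algHom k _ fun i => (scaleHom k (c i) (lam i)).comp (Pi.evalAlgHom k _ i)

/-- Restriction of a tuple to the coordinates satisfying `P`, as an algebra hom. -/
noncomputable def restrictAlg (k : Type*) [CommRing k] {ι : Type*} (c : ι → ℕ)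
    (P : ι → Prop) : TruncPi k c →ₐ[k] TruncPi k (fun i : {i // P i} => c i.1) where
  toFun x i := x i.1
  map_one' := rfl
  map_mul' _ _ := rfl
  map_zero' := rfl
  map_add' _ _ := rfl
  commutes' _ := rfl

/-- The set `k·1 ⊕ {b + b' + φ(b')}` associated to a gluing datum. -/
def graphSet {k A : Type*} [CommRing k] [CommRing A] [Algebra k A]
    (bI bI' : Submodule k A) (φ : ↥bI' →ₗ[k] A) : Set A :=
  {z | ∃ r : k, ∃ b ∈ bI, ∃ b' : ↥bI', z = r • (1 : A) + b + ↑b' + φ b'}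

/-- The set of exponents associated to the `i`-th branch of a monomial subalgebra. -/
def monoidOf {k : Type*} [Field k] {m : ℕ} (c : Fin m → ℕ)
    (B : Subalgebra k (TruncPi k c)) (i : Fin m) : Set ℕ :=
  {0} ∪ {d | 1 ≤ d ∧ d < c i ∧ tpow c i d ∈ B} ∪ {d | c i ≤ d}

/-!
The monomials `tᵢ^d` with `1 ≤ d < cᵢ`, together with `1`, form a basis of `A⁺`: they are part of
the monomial basis of `∏ᵢ k[tᵢ]/(tᵢ^{cᵢ})`, and a constant-term functional vanishes on them but
not on `1`. A subalgebra `B ≤ A⁺` spanned by `1` and monomials is then spanned by `1` and the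
basis monomials it contains (inside `A⁺`, `tᵢ^0` can only be `1`, and `tᵢ^d = 0` for `d ≥ cᵢ`),
so its corank counts the missing basis monomials, which are exactly the gaps of the `Mᵢ`.
Additive closure of `Mᵢ` is `tᵢ^a * tᵢ^b = tᵢ^(a + b)`.
-/

section TruncP

variable {k : Type*} [CommRing k]

theorem truncX_pow_eq_zero {c j : ℕ} (h : c ≤ j) : truncX k c ^ j = 0 := by
  rw [truncX, ← map_pow, Ideal.Quotient.eq_zero_iff_mem, Ideal.mem_span_singleton]
  exact pow_dvd_pow X h

theorem constTerm_truncX_pow {c : ℕ} (hc : 1 ≤ c) (j : ℕ) :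
    constTerm k c hc (truncX k c ^ j) = if j = 0 then 1 else 0 := by
  have h : constTerm k c hc (truncX k c) = 0 := by
    simp [constTerm, truncX]
  simp [h, zero_pow_eq]

variable (k) [Nontrivial k]

noncomputable def truncBasis (c : ℕ) : Module.Basis (Fin c) k (TruncP k c) :=
  (AdjoinRoot.powerBasis' (monic_X_pow (R := k) c)).basis.reindex (finCongr (natDegree_X_pow c))

theorem truncBasis_apply (c : ℕ) (j : Fin c) : truncBasis k c j = truncX k c ^ (j : ℕ) := by
  erw [truncBasis, Module.Basis.reindex_apply, PowerBasis.basis_eq_pow,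
    AdjoinRoot.powerBasis'_gen]
  rfl

variable {k}

theorem mem_span_truncX_pow_of_constTerm_eq_zero {c : ℕ} (hc : 1 ≤ c) {a : TruncP k c}
    (ha : constTerm k c hc a = 0) :
    a ∈ Submodule.span k ((truncX k c ^ ·) '' Set.Ico 1 c) := by
  have h0 : (truncBasis k c).repr a ⟨0, hc⟩ = 0 := by
    have h := congrArg (constTerm k c hc) ((truncBasis k c).sum_repr a)
    rw [map_sum, Finset.sum_eq_single ⟨0, hc⟩, ha, map_smul, truncBasis_apply,
      constTerm_truncX_pow, if_pos rfl, smul_eq_mul, mul_one] at h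
    · exact h
    · intro j _ hj
      rw [map_smul, truncBasis_apply, constTerm_truncX_pow, if_neg (Fin.ext_iff.not.mp hj),
        smul_zero]
    · simp
  rw [← (truncBasis k c).sum_repr a]
  refine Submodule.sum_mem _ fun j _ => ?_
  obtain ⟨_ | d, hd⟩ := j
  · rw [h0, zero_smul]
    exact Submodule.zero_mem _
  · refine Submodule.smul_mem _ _ (Submodule.subset_span ⟨d + 1, ⟨by omega, hd⟩, ?_⟩)
    rw [truncBasis_apply]

end TruncP

section Monomials

variable {k : Type*} [CommRing k] {ι : Type*} {c : ι → ℕ}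

theorem mem_Aplus_iff (hc : ∀ i, 1 ≤ c i) {x : TruncPi k c} :
    x ∈ Aplus k c hc ↔ ∀ i j, constTerm k (c i) (hc i) (x i) = constTerm k (c j) (hc j) (x j) := by
  simp only [Aplus, Algebra.mem_iInf, AlgHom.mem_equalizer, AlgHom.comp_apply,
    Pi.evalAlgHom_apply]

variable [DecidableEq ι]

theorem tpow_mul (i : ι) (a b : ℕ) :
    (tpow c i a : TruncPi k c) * tpow c i b = tpow c i (a + b) := by
  rw [tpow, tpow, tpow, ← Pi.single_mul, pow_add]

theorem tpow_eq_zero {i : ι} {j : ℕ} (h : c i ≤ j) : (tpow c i j : TruncPi k c) = 0 := by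
  rw [tpow, truncX_pow_eq_zero h, Pi.single_zero]

theorem constTerm_tpow_apply (hc : ∀ i, 1 ≤ c i) (i j : ι) (d : ℕ) :
    constTerm k (c j) (hc j) ((tpow c i d : TruncPi k c) j) = if i = j ∧ d = 0 then 1 else 0 := by
  rcases eq_or_ne i j with rfl | hij
  · simp [tpow, constTerm_truncX_pow]
  · simp [tpow, hij]

theorem tpow_mem_Aplus (hc : ∀ i, 1 ≤ c i) {i : ι} {d : ℕ} (hd : d ≠ 0) :
    (tpow c i d : TruncPi k c) ∈ Aplus k c hc := by
  simp [mem_Aplus_iff, constTerm_tpow_apply, hd]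

theorem tpow_zero_eq_one_of_mem_Aplus [Nontrivial k] (hc : ∀ i, 1 ≤ c i) {i : ι}
    (h : (tpow c i 0 : TruncPi k c) ∈ Aplus k c hc) : (tpow c i 0 : TruncPi k c) = 1 := by
  funext j
  have hj := (mem_Aplus_iff hc).mp h i j
  simp only [constTerm_tpow_apply, and_true, if_true] at hj
  obtain rfl : i = j := by by_contra hij; simp [hij] at hj
  simp [tpow]

end Monomials

section MonomialFamily

variable {k : Type*} [Field k] {ι : Type*} [Fintype ι] [DecidableEq ι] {c : ι → ℕ}

theorem linearIndependent_tpow :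
    LinearIndependent k fun p : Σ i, Fin (c i) => (tpow c p.1 p.2 : TruncPi k c) := by
  have h : (fun p : Σ i, Fin (c i) => (tpow c p.1 p.2 : TruncPi k c))
      = Pi.basis fun i => truncBasis k (c i) := by
    funext p
    rw [Pi.basis_apply, truncBasis_apply, tpow]
  rw [h]
  exact Module.Basis.linearIndependent _

variable (k c) in
noncomputable def monomialFamily (J : ι → Finset ℕ) : Option (Σ i, J i) → TruncPi k c :=
  fun o => Option.casesOn' o 1 fun p => tpow c p.1 p.2

theorem linearIndependent_monomialFamily [Nonempty ι] (hc : ∀ i, 1 ≤ c i) {J : ι → Finset ℕ}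
    (hJ : ∀ i, J i ⊆ Finset.Ico 1 (c i)) : LinearIndependent k (monomialFamily k c J) := by
  have hJc : ∀ p : Σ i, J i, (p.2 : ℕ) < c p.1 := fun p => (Finset.mem_Ico.mp (hJ _ p.2.2)).2
  refine LinearIndependent.option ?_ ?_
  · refine (linearIndependent_tpow (k := k)).comp (fun p => ⟨p.1, ⟨p.2, hJc p⟩⟩) ?_
    rintro ⟨i, d, hd⟩ ⟨j, e, he⟩ h
    obtain ⟨rfl, h⟩ := Sigma.mk.inj_iff.mp h
    obtain rfl : d = e := by simpa using h
    rfl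
  · set i₀ := Classical.arbitrary ι
    let φ : TruncPi k c →ₗ[k] k :=
      (constTerm k (c i₀) (hc i₀)).toLinearMap ∘ₗ LinearMap.proj i₀
    have hφ : Submodule.span k (Set.range fun p : Σ i, J i => (tpow c p.1 p.2 : TruncPi k c))
        ≤ LinearMap.ker φ := by
      rw [Submodule.span_le]
      rintro _ ⟨⟨i, d, hd⟩, rfl⟩
      have hd0 : d ≠ 0 := Nat.one_le_iff_ne_zero.mp (Finset.mem_Ico.mp (hJ i hd)).1
      change constTerm k _ (hc i₀) ((tpow c i d : TruncPi k c) i₀) = 0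
      rw [constTerm_tpow_apply, if_neg fun h => hd0 h.2]
    intro h1
    simpa [φ] using hφ h1

theorem finrank_span_monomialFamily [Nonempty ι] (hc : ∀ i, 1 ≤ c i) {J : ι → Finset ℕ}
    (hJ : ∀ i, J i ⊆ Finset.Ico 1 (c i)) :
    Module.finrank k (Submodule.span k (Set.range (monomialFamily k c J)))
      = ∑ i, (J i).card + 1 := by
  rw [finrank_span_eq_card (linearIndependent_monomialFamily hc hJ), Fintype.card_option,
    Fintype.card_sigma]
  simp

theorem span_monomialFamily_Ico [Nonempty ι] (hc : ∀ i, 1 ≤ c i) :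
    Submodule.span k (Set.range (monomialFamily k c fun i => Finset.Ico 1 (c i)))
      = Subalgebra.toSubmodule (Aplus k c hc) := by
  set M := Submodule.span k (Set.range (monomialFamily k c fun i => Finset.Ico 1 (c i)))
  apply le_antisymm
  · rw [Submodule.span_le]
    rintro _ ⟨_ | ⟨i, d, hd⟩, rfl⟩
    · exact (Aplus k c hc).one_mem
    · exact tpow_mem_Aplus hc (Nat.one_le_iff_ne_zero.mp (Finset.mem_Ico.mp hd).1)
  · intro x hx
    rw [Subalgebra.mem_toSubmodule, mem_Aplus_iff hc] at hx
    set i₀ := Classical.arbitrary ι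
    set r := constTerm k _ (hc i₀) (x i₀)
    have hsingle : ∀ i, (Pi.single i (x i - r • 1) : TruncPi k c) ∈ M := by
      intro i
      have h0 : constTerm k (c i) (hc i) (x i - r • 1) = 0 := by simp [hx i i₀, r]
      have h := Submodule.mem_map_of_mem (f := LinearMap.single k (fun i => TruncP k (c i)) i)
        (mem_span_truncX_pow_of_constTerm_eq_zero (hc i) h0)
      rw [← Submodule.span_image] at h
      refine Submodule.span_mono ?_ h
      rintro _ ⟨_, ⟨d, hd, rfl⟩, rfl⟩
      exact ⟨some ⟨i, d, by simpa using hd⟩, rfl⟩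
    have hx' : x = r • 1 + ∑ i, (Pi.single i (x i - r • 1) : TruncPi k c) := by
      rw [Finset.univ_sum_single (fun i => x i - r • 1)]
      ext i
      simp
    rw [hx']
    exact M.add_mem (M.smul_mem r (Submodule.subset_span ⟨none, rfl⟩))
      (M.sum_mem fun i _ => hsingle i)

end MonomialFamily

section MonomialSubalgebra

variable {k : Type*} [Field k] {ι : Type*} [DecidableEq ι] (c : ι → ℕ)

open Classical in
noncomputable def monomialExponents (B : Subalgebra k (TruncPi k c)) (i : ι) : Finset ℕ :=
  (Finset.Ico 1 (c i)).filter fun d => tpow c i d ∈ B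

variable {c}

theorem mem_monomialExponents {B : Subalgebra k (TruncPi k c)} {i : ι} {d : ℕ} :
    d ∈ monomialExponents c B i ↔ 1 ≤ d ∧ d < c i ∧ tpow c i d ∈ B := by
  simp [monomialExponents, and_assoc]

theorem monomialExponents_subset (B : Subalgebra k (TruncPi k c)) (i : ι) :
    monomialExponents c B i ⊆ Finset.Ico 1 (c i) := fun _ hd =>
  Finset.mem_Ico.mpr ((mem_monomialExponents.mp hd).imp_right And.left)

theorem toSubmodule_eq_span_monomialFamily [Fintype ι] (hc : ∀ i, 1 ≤ c i)
    {B : Subalgebra k (TruncPi k c)} (hB : B ≤ Aplus k c hc) (S : Set (ι × ℕ))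
    (hspan : Subalgebra.toSubmodule B
      = Submodule.span k ({1} ∪ {x | ∃ p ∈ S, x = tpow c p.1 p.2})) :
    Subalgebra.toSubmodule B
      = Submodule.span k (Set.range (monomialFamily k c (monomialExponents c B))) := by
  set M := Submodule.span k (Set.range (monomialFamily k c (monomialExponents c B)))
  have hone : (1 : TruncPi k c) ∈ M := Submodule.subset_span ⟨none, rfl⟩
  apply le_antisymm
  · rw [hspan, Submodule.span_le]
    rintro _ (rfl | ⟨⟨i, d⟩, hp, rfl⟩)
    · exact hone
    have hmem : (tpow c i d : TruncPi k c) ∈ B := by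
      rw [← Subalgebra.mem_toSubmodule, hspan]
      exact Submodule.subset_span (Or.inr ⟨_, hp, rfl⟩)
    rcases Nat.eq_zero_or_pos d with rfl | hd
    · rw [tpow_zero_eq_one_of_mem_Aplus hc (hB hmem)]
      exact hone
    rcases lt_or_ge d (c i) with hdc | hdc
    · exact Submodule.subset_span ⟨some ⟨i, d, mem_monomialExponents.mpr ⟨hd, hdc, hmem⟩⟩, rfl⟩
    · rw [tpow_eq_zero hdc]
      exact M.zero_mem
  · rw [Submodule.span_le]
    rintro _ ⟨_ | ⟨i, d, hd⟩, rfl⟩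
    · exact B.one_mem
    · exact (mem_monomialExponents.mp hd).2.2

end MonomialSubalgebra

section MonoidOf

variable {k : Type*} [Field k] {m : ℕ} {c : Fin m → ℕ} {B : Subalgebra k (TruncPi k c)}

theorem mem_monoidOf_iff {i : Fin m} {d : ℕ} :
    d ∈ monoidOf c B i ↔ d = 0 ∨ d ∈ monomialExponents c B i ∨ c i ≤ d := by
  simp [monoidOf, mem_monomialExponents, or_assoc]

theorem add_mem_monoidOf {i : Fin m} {a b : ℕ} (ha : a ∈ monoidOf c B i)
    (hb : b ∈ monoidOf c B i) : a + b ∈ monoidOf c B i := by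
  simp only [mem_monoidOf_iff, mem_monomialExponents] at ha hb ⊢
  rcases lt_or_ge (a + b) (c i) with hlt | hge
  · rcases ha with rfl | ⟨ha, -, haB⟩ | ha
    · simpa using hb
    rcases hb with rfl | ⟨hb, -, hbB⟩ | hb
    · exact Or.inr (Or.inl ⟨ha, hlt, haB⟩)
    · exact Or.inr (Or.inl ⟨by omega, hlt, by rw [← tpow_mul]; exact B.mul_mem haB hbB⟩)
    all_goals omega
  · exact Or.inr (Or.inr hge)

theorem setOf_notMem_monoidOf (i : Fin m) :
    {n | n ∉ monoidOf c B i} = ↑(Finset.Ico 1 (c i) \ monomialExponents c B i) := by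
  ext n
  simp only [Set.mem_ofPred_eq, mem_monoidOf_iff, Finset.coe_sdiff, Set.mem_sdiff,
    Finset.mem_coe, Finset.mem_Ico, not_or]
  constructor
  · rintro ⟨h0, hE, hc⟩
    exact ⟨⟨by omega, by omega⟩, hE⟩
  · rintro ⟨⟨h1, h2⟩, hE⟩
    exact ⟨by omega, hE, by omega⟩

theorem range_monomialFamily_monomialExponents :
    Set.range (monomialFamily k c (monomialExponents c B))
      = {1} ∪ {x | ∃ i, ∃ d, 1 ≤ d ∧ d < c i ∧ d ∈ monoidOf c B i ∧ x = tpow c i d} := by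
  ext x
  constructor
  · rintro ⟨_ | ⟨i, d, hd⟩, rfl⟩
    · exact Or.inl rfl
    · obtain ⟨h1, h2, -⟩ := mem_monomialExponents.mp hd
      exact Or.inr ⟨i, d, h1, h2, mem_monoidOf_iff.mpr (Or.inr (Or.inl hd)), rfl⟩
  · rintro (rfl | ⟨i, d, h1, h2, hd, rfl⟩)
    · exact ⟨none, rfl⟩
    · have hd' : d ∈ monomialExponents c B i := by
        rcases mem_monoidOf_iff.mp hd with h | h | h
        · omega
        · exact h
        · omega
      exact ⟨some ⟨i, d, hd'⟩, rfl⟩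

end MonoidOf

/-- a corank-`g` subalgebra of `A⁺` spanned by `1` and monomials gives rise to
numerical monoids `Mᵢ` with conductor at most `cᵢ` and total genus `g`, and `B` is the
monomial span associated to them. -/
theorem monomial_subalgebra_gives_numerical_monoids
    {k : Type*} [Field k] {m : ℕ} (hm : 1 ≤ m) (c : Fin m → ℕ) (hc : ∀ i, 1 ≤ c i)
    (B : Subalgebra k (TruncPi k c)) (hB : B ≤ Aplus k c hc)
    (g : ℕ) (hg : Module.finrank k ↥B + g = Module.finrank k ↥(Aplus k c hc))
    (S : Set (Fin m × ℕ))
    (hspan : Subalgebra.toSubmodule B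
      = Submodule.span k ({1} ∪ {x | ∃ p ∈ S, x = tpow c p.1 p.2})) :
    (∀ i, ∀ a ∈ monoidOf c B i, ∀ b ∈ monoidOf c B i, a + b ∈ monoidOf c B i) ∧
    (∀ i, ∀ n : ℕ, c i ≤ n → n ∈ monoidOf c B i) ∧
    (∑ i, Set.ncard {n : ℕ | n ∉ monoidOf c B i}) = g ∧
    Subalgebra.toSubmodule B = Submodule.span k
      ({1} ∪ {x | ∃ i, ∃ d, 1 ≤ d ∧ d < c i ∧ d ∈ monoidOf c B i ∧ x = tpow c i d}) := by
  have : Nonempty (Fin m) := ⟨⟨0, hm⟩⟩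
  have hBspan := toSubmodule_eq_span_monomialFamily hc hB S hspan
  refine ⟨fun i a ha b hb => add_mem_monoidOf ha hb,
    fun i n hn => mem_monoidOf_iff.mpr (Or.inr (Or.inr hn)), ?_,
    by rw [hBspan, range_monomialFamily_monomialExponents]⟩
  have hdimB : Module.finrank k B = ∑ i, (monomialExponents c B i).card + 1 := by
    rw [← Subalgebra.finrank_toSubmodule, hBspan]
    exact finrank_span_monomialFamily hc (monomialExponents_subset B)
  have hdimA : Module.finrank k (Aplus k c hc) = ∑ i, (Finset.Ico 1 (c i)).card + 1 := by
    rw [← Subalgebra.finrank_toSubmodule, ← span_monomialFamily_Ico hc]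
    exact finrank_span_monomialFamily hc fun i => subset_rfl
  have hgaps : ∑ i, Set.ncard {n : ℕ | n ∉ monoidOf c B i} + ∑ i, (monomialExponents c B i).card
      = ∑ i, (Finset.Ico 1 (c i)).card := by
    rw [← Finset.sum_add_distrib]
    refine Finset.sum_congr rfl fun i _ => ?_
    rw [setOf_notMem_monoidOf, Set.ncard_coe_finset]
    exact Finset.card_sdiff_add_card_eq_card (monomialExponents_subset B i)
  omega
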